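/- arXiv:1702.08492 — 8 statements merged into one kernel-verified Lean document; each statement's English description precedes it below -/
import Mathlib

section
/- Let n ≥ 1, let M : ℂ → ℂ^{n×n} be a function, let σ, μ, μ₊ ∈ ℂ with μ₊ ≠ μ, suppose S := M(σ) is invertible, let c, x ∈ ℂⁿ, let w^H := c^H S⁻¹, and set Δμ := μ₊ − μ. Then a vector x₊ ∈ ℂⁿ satisfies the QN3 correction equations S·(x₊ − x) + Δμ·((M(μ₊) − M(μ))/(μ₊ − μ))·x = −M(μ)·x and c^H(x₊ − x) = 0 if and only if w^H M(μ₊) x = 0 and x₊ = x − S⁻¹ M(μ₊) x. (Hence the quasi-Newton method QN3 is equivalent to Neumaier's residual inverse iteration.) -/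
/-!
Since `Δμ · M[μ₊, μ] = M(μ₊) − M(μ)`, the residual `M(μ) x` cancels from the first QN3 equation,
which becomes `S (x₊ − x) = −M(μ₊) x`, i.e. the residual inverse iteration update. Substituting
`x₊ − x = −S⁻¹ M(μ₊) x` turns the normalization `cᴴ (x₊ − x) = 0` into `wᴴ M(μ₊) x = 0`.
-/

open Matrix

namespace Matrix

variable {ι R : Type*} [Fintype ι] [DecidableEq ι] [CommRing R]

theorem mulVec_eq_iff_eq_nonsing_inv_mulVec {S : Matrix ι ι R} (hS : IsUnit S)
    {u v : ι → R} : S *ᵥ v = u ↔ v = S⁻¹ *ᵥ u := by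
  have hdet := (isUnit_iff_isUnit_det S).mp hS
  constructor
  · rintro rfl
    rw [mulVec_mulVec, nonsing_inv_mul S hdet, one_mulVec]
  · rintro rfl
    rw [mulVec_mulVec, mul_nonsing_inv S hdet, one_mulVec]

theorem mulVec_sub_add_sub_mulVec_eq_neg_iff {S : Matrix ι ι R} (hS : IsUnit S)
    (A B : Matrix ι ι R) (x y : ι → R) :
    S *ᵥ (y - x) + (A - B) *ᵥ x = -(B *ᵥ x) ↔ y = x - S⁻¹ *ᵥ (A *ᵥ x) := by
  calc S *ᵥ (y - x) + (A - B) *ᵥ x = -(B *ᵥ x)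
      ↔ S *ᵥ (y - x) = -(A *ᵥ x) := by
        rw [sub_mulVec]
        constructor <;> intro h <;> linear_combination h
    _ ↔ y - x = -(S⁻¹ *ᵥ (A *ᵥ x)) := by
        rw [mulVec_eq_iff_eq_nonsing_inv_mulVec hS, mulVec_neg]
    _ ↔ y = x - S⁻¹ *ᵥ (A *ᵥ x) := by
        rw [sub_eq_iff_eq_add', ← sub_eq_add_neg]

end Matrix

theorem qn3_is_residual_inverse_iteration_general (n : ℕ)
    (M : ℂ → Matrix (Fin n) (Fin n) ℂ) (σ μ μp : ℂ) (hμ : μp ≠ μ)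
    (hS : IsUnit (M σ)) (c x : Fin n → ℂ)
    (w : Fin n → ℂ) (hw : w = star c ᵥ* (M σ)⁻¹)
    (Δμ : ℂ) (hΔμ : Δμ = μp - μ) (xp : Fin n → ℂ) :
    (M σ *ᵥ (xp - x) + Δμ • (((μp - μ)⁻¹ • (M μp - M μ)) *ᵥ x) = -(M μ *ᵥ x) ∧
        star c ⬝ᵥ (xp - x) = 0) ↔
      (w ⬝ᵥ (M μp *ᵥ x) = 0 ∧ xp = x - (M σ)⁻¹ *ᵥ (M μp *ᵥ x)) := by
  subst hw hΔμ
  have hsecant : (μp - μ) • (((μp - μ)⁻¹ • (M μp - M μ)) *ᵥ x) = (M μp - M μ) *ᵥ x := by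
    rw [smul_mulVec, smul_inv_smul₀ (sub_ne_zero.mpr hμ)]
  rw [hsecant, mulVec_sub_add_sub_mulVec_eq_neg_iff hS, and_comm]
  refine and_congr_left fun hxp => ?_
  rw [hxp, sub_sub_cancel_left, dotProduct_neg, neg_eq_zero, dotProduct_mulVec]

/-- QN3 is residual inverse iteration: with `S = M σ` invertible,
`wᴴ = cᴴ S⁻¹` and `Δμ = μ₊ − μ ≠ 0`, the QN3 correction equations
`S (x₊ − x) + Δμ ((M μ₊ − M μ)/(μ₊ − μ)) x = −M μ x` and `cᴴ(x₊ − x) = 0` hold iff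
`wᴴ M(μ₊) x = 0` and `x₊ = x − S⁻¹ M(μ₊) x`. -/
theorem qn3_is_residual_inverse_iteration (n : ℕ) (hn : 1 ≤ n)
    (M : ℂ → Matrix (Fin n) (Fin n) ℂ) (σ μ μp : ℂ) (hμ : μp ≠ μ)
    (hS : IsUnit (M σ)) (c x : Fin n → ℂ)
    (w : Fin n → ℂ) (hw : w = star c ᵥ* (M σ)⁻¹)
    (Δμ : ℂ) (hΔμ : Δμ = μp - μ) (xp : Fin n → ℂ) :
    (M σ *ᵥ (xp - x) + Δμ • (((μp - μ)⁻¹ • (M μp - M μ)) *ᵥ x) = -(M μ *ᵥ x) ∧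
        star c ⬝ᵥ (xp - x) = 0) ↔
      (w ⬝ᵥ (M μp *ᵥ x) = 0 ∧ xp = x - (M σ)⁻¹ *ᵥ (M μp *ᵥ x)) :=
  qn3_is_residual_inverse_iteration_general n M σ μ μp hμ hS c x w hw Δμ hΔμ xp
end

section
/- Let n ≥ 1, let M : ℂ → ℂ^{n×n} be differentiable at μ ∈ ℂ, set T := M(μ) and D := M'(μ), let c, x ∈ ℂⁿ, and let Δμ ∈ ℂ. If x₊ ∈ ℂⁿ satisfies the QN4 correction equations T·(x₊ − x) + Δμ·D·x₊ = −T·x and c^H(x₊ − x) = 1 − c^H x, then T·x₊ + Δμ·D·x₊ = 0 and c^H x₊ = 1; that is, (Δμ, x₊) solves the generalized linear eigenvalue problem M(μ)y + θ·M'(μ)y = 0 with normalization c^H y = 1. (Hence the quasi-Newton method QN4 is equivalent to Ruhe's method of successive linear problems.) -/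
open Matrix

theorem Matrix.mulVec_add_eq_zero_of_mulVec_sub_add_eq_neg {R m n : Type*} [Ring R] [Fintype n]
    (A : Matrix m n R) (x y : n → R) (v : m → R) (h : A *ᵥ (y - x) + v = -(A *ᵥ x)) :
    A *ᵥ y + v = 0 := by
  rwa [mulVec_sub, sub_add_eq_add_sub, sub_eq_iff_eq_add, neg_add_cancel] at h

theorem dotProduct_eq_of_dotProduct_sub_eq_sub {R n : Type*} [Ring R] [Fintype n]
    (u x y : n → R) (r : R) (h : u ⬝ᵥ (y - x) = r - u ⬝ᵥ x) : u ⬝ᵥ y = r := by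
  rwa [dotProduct_sub, sub_left_inj] at h

theorem qn4_is_mslp_general (n : ℕ)
    (T D : Matrix (Fin n) (Fin n) ℂ)
    (c x xp : Fin n → ℂ) (Δμ : ℂ)
    (h1 : T *ᵥ (xp - x) + Δμ • (D *ᵥ xp) = -(T *ᵥ x))
    (h2 : star c ⬝ᵥ (xp - x) = 1 - star c ⬝ᵥ x) :
    T *ᵥ xp + Δμ • (D *ᵥ xp) = 0 ∧ star c ⬝ᵥ xp = 1 :=
  ⟨T.mulVec_add_eq_zero_of_mulVec_sub_add_eq_neg x xp _ h1,
    dotProduct_eq_of_dotProduct_sub_eq_sub _ x xp 1 h2⟩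

/-- QN4 is the method of successive linear problems: with `T = M μ` and
`D = M'(μ)` (entrywise complex derivative), if `x₊` satisfies the QN4 correction equations
`T (x₊ − x) + Δμ D x₊ = −T x` and `cᴴ(x₊ − x) = 1 − cᴴ x`, then
`T x₊ + Δμ D x₊ = 0` and `cᴴ x₊ = 1`. -/
theorem qn4_is_mslp (n : ℕ) (hn : 1 ≤ n)
    (M : ℂ → Matrix (Fin n) (Fin n) ℂ) (μ : ℂ)
    (T D : Matrix (Fin n) (Fin n) ℂ) (hT : T = M μ)
    (hD : ∀ i j, HasDerivAt (fun t : ℂ => M t i j) (D i j) μ)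
    (c x xp : Fin n → ℂ) (Δμ : ℂ)
    (h1 : T *ᵥ (xp - x) + Δμ • (D *ᵥ xp) = -(T *ᵥ x))
    (h2 : star c ⬝ᵥ (xp - x) = 1 - star c ⬝ᵥ x) :
    T *ᵥ xp + Δμ • (D *ᵥ xp) = 0 ∧ star c ⬝ᵥ xp = 1 :=
  qn4_is_mslp_general n T D c x xp Δμ h1 h2
end

section
/- Let n ≥ 1, let S, T ∈ ℂ^{n×n} with S invertible, let b, d, c ∈ ℂⁿ with c^H (S⁻¹ b) ≠ 0, and set q₀ := S⁻¹ b and α₀ := 1/(c^H q₀). Let J̃ ∈ ℂ^{(n+1)×(n+1)} be the block matrix [[S, b],[c^H, 0]] and J the block matrix [[T, d],[c^H, 0]]. Then J̃ is invertible and I − J̃⁻¹ J equals the block matrix A₁ = [[(I − α₀ q₀ c^H) S⁻¹ (S − T), (I − α₀ q₀ c^H) S⁻¹ (b − d)],[α₀ c^H S⁻¹ (S − T), α₀ c^H S⁻¹ (b − d)]]. -/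
/-!
Block elimination with the Schur complement `-(cᴴ q₀) = -1/α₀` of `S` gives
`J̃⁻¹ = [[(I - α₀ q₀ cᴴ) S⁻¹, α₀ q₀], [α₀ cᴴ S⁻¹, -α₀]]`, which is checked directly from
`S q₀ = b` and `cᴴ (I - α₀ q₀ cᴴ) = 0`. Then `I - J̃⁻¹ J = J̃⁻¹ (J̃ - J)` with
`J̃ - J = [[S - T, b - d], [0, 0]]`, so `A₁` is the first block column of `J̃⁻¹` times
`[S - T, b - d]`.
-/

open Matrix

/-- A column vector as an `n × 1` matrix. -/
def colVec {n : ℕ} (v : Fin n → ℂ) : Matrix (Fin n) Unit ℂ :=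
  Matrix.of fun i _ => v i

/-- A row vector as a `1 × n` matrix. -/
def rowVec {n : ℕ} (v : Fin n → ℂ) : Matrix Unit (Fin n) ℂ :=
  Matrix.of fun _ j => v j

/-- A scalar as a `1 × 1` matrix. -/
def scalarBlock (s : ℂ) : Matrix Unit Unit ℂ :=
  Matrix.of fun _ _ => s

namespace Matrix

variable {R m : Type*} [CommRing R] [Fintype m] [DecidableEq m]

lemma vecMul_one_sub_smul_vecMulVec_self {q w : m → R} {α : R} (h : α * (w ⬝ᵥ q) = 1) :
    w ᵥ* (1 - α • vecMulVec q w) = 0 := by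
  rw [vecMul_sub, vecMul_one, vecMul_smul, vecMul_vecMulVec, smul_smul, h, one_smul, sub_self]

noncomputable def borderedInv (A : Matrix m m R) (q w : m → R) (α : R) :
    Matrix (m ⊕ Unit) (m ⊕ Unit) R :=
  fromBlocks ((1 - α • vecMulVec q w) * A⁻¹) (replicateCol Unit (α • q))
    (replicateRow Unit (α • (w ᵥ* A⁻¹))) (of fun _ _ => -α)

lemma fromBlocks_mul_borderedInv {A : Matrix m m R} (hA : IsUnit A.det) {u w q : m → R} {α : R}
    (hq : A *ᵥ q = u) (hα : α * (w ⬝ᵥ q) = 1) :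
    fromBlocks A (replicateCol Unit u) (replicateRow Unit w) 0 * borderedInv A q w α = 1 := by
  rw [borderedInv, fromBlocks_multiply, ← fromBlocks_one, fromBlocks_inj]
  refine ⟨?_, ?_, ?_, ?_⟩
  · rw [← vecMulVec_eq, ← Matrix.mul_assoc, Matrix.mul_sub, Matrix.mul_one, Matrix.mul_smul,
      mul_vecMulVec, hq, Matrix.sub_mul, Matrix.smul_mul, vecMulVec_mul, mul_nonsing_inv _ hA,
      vecMulVec_smul, sub_add_cancel]
  · rw [← replicateCol_mulVec, mulVec_smul, hq]
    ext i j
    simp [mul_apply, mul_comm]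
  · rw [Matrix.zero_mul, add_zero, ← replicateRow_vecMul, ← vecMul_vecMul,
      vecMul_one_sub_smul_vecMulVec_self hα, zero_vecMul, replicateRow_zero]
  · ext i j
    simp [replicateRow_mul_replicateCol, hα]

lemma borderedInv_mul_fromBlocks (A X : Matrix m m R) (q w v : m → R) (α : R) :
    borderedInv A q w α * fromBlocks X (replicateCol Unit v) 0 0 =
      fromBlocks ((1 - α • vecMulVec q w) * A⁻¹ * X)
        (replicateCol Unit (((1 - α • vecMulVec q w) * A⁻¹) *ᵥ v))
        (replicateRow Unit (α • (w ᵥ* (A⁻¹ * X)))) (of fun _ _ => α * (w ⬝ᵥ (A⁻¹ *ᵥ v))) := by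
  simp only [borderedInv, fromBlocks_multiply, Matrix.mul_zero, add_zero]
  refine fromBlocks_inj.mpr ⟨rfl, (replicateCol_mulVec _ _).symm, ?_, ?_⟩
  · rw [← replicateRow_vecMul, smul_vecMul, vecMul_vecMul]
  · rw [replicateRow_mul_replicateCol, smul_dotProduct, smul_eq_mul, dotProduct_mulVec]

end Matrix

theorem qn1_iteration_matrix_general (n : ℕ)
    (S T : Matrix (Fin n) (Fin n) ℂ) (hS : IsUnit S)
    (b d c : Fin n → ℂ) (hc : star c ⬝ᵥ (S⁻¹ *ᵥ b) ≠ 0)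
    (q0 : Fin n → ℂ) (hq0 : q0 = S⁻¹ *ᵥ b)
    (α0 : ℂ) (hα0 : α0 = 1 / (star c ⬝ᵥ q0))
    (Jt J A1 : Matrix (Fin n ⊕ Unit) (Fin n ⊕ Unit) ℂ)
    (hJt : Jt = Matrix.fromBlocks S (colVec b) (rowVec (star c)) 0)
    (hJ : J = Matrix.fromBlocks T (colVec d) (rowVec (star c)) 0)
    (hA1 : A1 = Matrix.fromBlocks
      ((1 - α0 • vecMulVec q0 (star c)) * S⁻¹ * (S - T))
      (colVec (((1 - α0 • vecMulVec q0 (star c)) * S⁻¹) *ᵥ (b - d)))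
      (rowVec (α0 • (star c ᵥ* (S⁻¹ * (S - T)))))
      (scalarBlock (α0 * (star c ⬝ᵥ (S⁻¹ *ᵥ (b - d)))))) :
    IsUnit Jt ∧ 1 - Jt⁻¹ * J = A1 := by
  have hdet : IsUnit S.det := (isUnit_iff_isUnit_det S).mp hS
  have hq : S *ᵥ q0 = b := by rw [hq0, mulVec_mulVec, mul_nonsing_inv _ hdet, one_mulVec]
  have hα : α0 * (star c ⬝ᵥ q0) = 1 := by rw [hα0, one_div_mul_cancel (hq0 ▸ hc)]
  have hJtK : Jt * borderedInv S q0 (star c) α0 = 1 :=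
    hJt ▸ fromBlocks_mul_borderedInv hdet hq hα
  have hdetJt : IsUnit Jt.det := isUnit_det_of_right_inverse hJtK
  refine ⟨(isUnit_iff_isUnit_det Jt).mpr hdetJt, ?_⟩
  have hJtJ : Jt - J = fromBlocks (S - T) (replicateCol Unit (b - d)) 0 0 := by
    subst hJt hJ
    ext (i | i) (j | j) <;> simp [colVec, rowVec]
  calc 1 - Jt⁻¹ * J = Jt⁻¹ * (Jt - J) := by rw [Matrix.mul_sub, nonsing_inv_mul _ hdetJt]
    -- `colVec`, `rowVec`, `scalarBlock` are `replicateCol Unit`, `replicateRow Unit`, `of` by definition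
    _ = A1 := by rw [inv_eq_right_inv hJtK, hJtJ, borderedInv_mul_fromBlocks, hA1]; rfl

/-- Schur-complement computation behind the local convergence of QN1:
with `J̃ = [[S, b],[cᴴ, 0]]` and `J = [[T, d],[cᴴ, 0]]`, `J̃` is invertible and
`I − J̃⁻¹ J` equals the block matrix `A₁`. -/
theorem qn1_iteration_matrix (n : ℕ) (hn : 1 ≤ n)
    (S T : Matrix (Fin n) (Fin n) ℂ) (hS : IsUnit S)
    (b d c : Fin n → ℂ) (hc : star c ⬝ᵥ (S⁻¹ *ᵥ b) ≠ 0)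
    (q0 : Fin n → ℂ) (hq0 : q0 = S⁻¹ *ᵥ b)
    (α0 : ℂ) (hα0 : α0 = 1 / (star c ⬝ᵥ q0))
    (Jt J A1 : Matrix (Fin n ⊕ Unit) (Fin n ⊕ Unit) ℂ)
    (hJt : Jt = Matrix.fromBlocks S (colVec b) (rowVec (star c)) 0)
    (hJ : J = Matrix.fromBlocks T (colVec d) (rowVec (star c)) 0)
    (hA1 : A1 = Matrix.fromBlocks
      ((1 - α0 • vecMulVec q0 (star c)) * S⁻¹ * (S - T))
      (colVec (((1 - α0 • vecMulVec q0 (star c)) * S⁻¹) *ᵥ (b - d)))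
      (rowVec (α0 • (star c ᵥ* (S⁻¹ * (S - T)))))
      (scalarBlock (α0 * (star c ⬝ᵥ (S⁻¹ *ᵥ (b - d)))))) :
    IsUnit Jt ∧ 1 - Jt⁻¹ * J = A1 :=
  qn1_iteration_matrix_general n S T hS b d c hc q0 hq0 α0 hα0 Jt J A1 hJt hJ hA1
end

section
/- Let n ≥ 1, let S, T ∈ ℂ^{n×n} with S invertible, let d, c ∈ ℂⁿ with c^H (S⁻¹ d) ≠ 0, and set q := S⁻¹ d and α := 1/(c^H q). Let J̃ ∈ ℂ^{(n+1)×(n+1)} be the block matrix [[S, d],[c^H, 0]] and J the block matrix [[T, d],[c^H, 0]]. Then J̃ is invertible and I − J̃⁻¹ J equals the block matrix A₂ = [[(I − α q c^H) S⁻¹ (S − T), 0],[α c^H S⁻¹ (S − T), 0]]. -/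
open Matrix

section helpers

variable {n : ℕ}

lemma colVec_mul_rowVec (u v : Fin n → ℂ) : colVec u * rowVec v = vecMulVec u v := by
  ext i j; simp [colVec, rowVec, Matrix.mul_apply, vecMulVec]

lemma rowVec_mul_colVec (u v : Fin n → ℂ) :
    rowVec u * colVec v = Matrix.of (fun _ _ => u ⬝ᵥ v) := by
  ext i j; simp [colVec, rowVec, Matrix.mul_apply, dotProduct]

lemma mul_colVec (M : Matrix (Fin n) (Fin n) ℂ) (v : Fin n → ℂ) :
    M * colVec v = colVec (M *ᵥ v) := by
  ext i j; simp [colVec, Matrix.mul_apply, Matrix.mulVec, dotProduct]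

lemma rowVec_mul (M : Matrix (Fin n) (Fin n) ℂ) (u : Fin n → ℂ) :
    rowVec u * M = rowVec (u ᵥ* M) := by
  ext i j; simp [rowVec, Matrix.mul_apply, Matrix.vecMul, dotProduct]

lemma colVec_smul (a : ℂ) (v : Fin n → ℂ) : colVec (a • v) = a • colVec v := by
  ext i j; simp [colVec]

lemma sub_smul_rowVec (a : ℂ) (u v : Fin n → ℂ) :
    rowVec (a • (u - v)) = a • (rowVec u - rowVec v) := by
  ext i j; simp [rowVec, mul_sub]

lemma rowVec_smul (a : ℂ) (v : Fin n → ℂ) : rowVec (a • v) = a • rowVec v := by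
  ext i j; simp [rowVec]

lemma const_mul_rowVec (a : ℂ) (u : Fin n → ℂ) :
    (Matrix.of (fun _ _ => a) : Matrix Unit Unit ℂ) * rowVec u = a • rowVec u := by
  ext i j; simp [rowVec, Matrix.mul_apply]

lemma mul_vecMulVec (M : Matrix (Fin n) (Fin n) ℂ) (u v : Fin n → ℂ) :
    M * vecMulVec u v = vecMulVec (M *ᵥ u) v := by
  ext i j; simp [Matrix.mul_apply, vecMulVec, Matrix.mulVec, dotProduct, Finset.sum_mul,
    mul_assoc]

lemma vecMulVec_mul (M : Matrix (Fin n) (Fin n) ℂ) (u v : Fin n → ℂ) :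
    vecMulVec u v * M = vecMulVec u (v ᵥ* M) := by
  ext i j; simp [Matrix.mul_apply, vecMulVec, Matrix.vecMul, dotProduct, Finset.mul_sum,
    mul_assoc]

lemma vecMulVec_mul_colVec (u v x : Fin n → ℂ) :
    vecMulVec u v * colVec x = colVec ((v ⬝ᵥ x) • u) := by
  ext i j; simp [Matrix.mul_apply, vecMulVec, colVec, dotProduct, Finset.mul_sum,
    mul_assoc, mul_comm, mul_left_comm]

lemma rowVec_mul_vecMulVec (u v x : Fin n → ℂ) :
    rowVec u * vecMulVec v x = (u ⬝ᵥ v) • rowVec x := by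
  ext i j; simp [Matrix.mul_apply, vecMulVec, rowVec, dotProduct, Finset.sum_mul, mul_assoc]

lemma fromBlocks_sub {R : Type*} [Ring R] {l m o p : Type*}
    (A A' : Matrix l m R) (B B' : Matrix l o R) (C C' : Matrix p m R) (D D' : Matrix p o R) :
    Matrix.fromBlocks A B C D - Matrix.fromBlocks A' B' C' D' =
      Matrix.fromBlocks (A - A') (B - B') (C - C') (D - D') := by
  ext (i | i) (j | j) <;> simp [Matrix.fromBlocks]

lemma fromBlocks_ext {R : Type*} {l m o p : Type*}
    {A A' : Matrix l m R} {B B' : Matrix l o R} {C C' : Matrix p m R} {D D' : Matrix p o R}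
    (h1 : A = A') (h2 : B = B') (h3 : C = C') (h4 : D = D') :
    Matrix.fromBlocks A B C D = Matrix.fromBlocks A' B' C' D' := by
  rw [h1, h2, h3, h4]

end helpers

/-- Schur-complement computation behind the local convergence of QN2:
with `J̃ = [[S, d],[cᴴ, 0]]` and `J = [[T, d],[cᴴ, 0]]`, `J̃` is invertible and
`I − J̃⁻¹ J` equals the block matrix `A₂`, whose last block column vanishes. -/
theorem qn2_iteration_matrix (n : ℕ) (hn : 1 ≤ n)
    (S T : Matrix (Fin n) (Fin n) ℂ) (hS : IsUnit S)
    (d c : Fin n → ℂ) (hc : star c ⬝ᵥ (S⁻¹ *ᵥ d) ≠ 0)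
    (q : Fin n → ℂ) (hq : q = S⁻¹ *ᵥ d)
    (α : ℂ) (hα : α = 1 / (star c ⬝ᵥ q))
    (Jt J A2 : Matrix (Fin n ⊕ Unit) (Fin n ⊕ Unit) ℂ)
    (hJt : Jt = Matrix.fromBlocks S (colVec d) (rowVec (star c)) 0)
    (hJ : J = Matrix.fromBlocks T (colVec d) (rowVec (star c)) 0)
    (hA2 : A2 = Matrix.fromBlocks
      ((1 - α • vecMulVec q (star c)) * S⁻¹ * (S - T))
      0
      (rowVec (α • (star c ᵥ* (S⁻¹ * (S - T)))))
      0) :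
    IsUnit Jt ∧ 1 - Jt⁻¹ * J = A2 := by
  have hdet : IsUnit S.det := (Matrix.isUnit_iff_isUnit_det S).mp hS
  have hSi : S * S⁻¹ = 1 := Matrix.mul_nonsing_inv S hdet
  have hiS : S⁻¹ * S = 1 := Matrix.nonsing_inv_mul S hdet
  have hcq : star c ⬝ᵥ q ≠ 0 := by rw [hq]; exact hc
  have hkey : α * (star c ⬝ᵥ q) = 1 := by rw [hα]; field_simp
  have hSq : S *ᵥ q = d := by
    rw [hq, Matrix.mulVec_mulVec, hSi, Matrix.one_mulVec]
  have hiSd : S⁻¹ *ᵥ d = q := hq.symm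
  set w : Fin n → ℂ := star c with hw
  set B : Matrix (Fin n ⊕ Unit) (Fin n ⊕ Unit) ℂ :=
    Matrix.fromBlocks (S⁻¹ - α • (vecMulVec q w * S⁻¹)) (colVec (α • q))
      (rowVec (α • (w ᵥ* S⁻¹))) (Matrix.of (fun _ _ => -α)) with hB
  have hmul : Jt * B = 1 := by
    rw [hJt, hB, Matrix.fromBlocks_multiply, ← Matrix.fromBlocks_one]
    apply fromBlocks_ext
    · -- top-left
      rw [Matrix.mul_sub, hSi, Matrix.mul_smul, ← Matrix.mul_assoc, mul_vecMulVec, hSq,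
        rowVec_smul, Matrix.mul_smul, colVec_mul_rowVec, vecMulVec_mul]
      abel
    · -- top-right
      rw [mul_colVec, Matrix.mulVec_smul, hSq]
      ext i j
      simp [colVec, Matrix.mul_apply, mul_comm]
    · -- bottom-left
      rw [Matrix.mul_sub, Matrix.mul_smul, ← Matrix.mul_assoc, rowVec_mul_vecMulVec,
        Matrix.smul_mul, smul_smul, hkey, one_smul, rowVec_mul]
      simp
    · -- bottom-right
      rw [colVec_smul, Matrix.mul_smul, rowVec_mul_colVec]
      ext i j
      simp [smul_eq_mul, hkey, Matrix.one_apply]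
  have hunit : IsUnit Jt := by
    apply (Matrix.isUnit_iff_isUnit_det Jt).mpr
    apply IsUnit.of_mul_eq_one B.det
    rw [← Matrix.det_mul, hmul, Matrix.det_one]
  have hinv : Jt⁻¹ = B := Matrix.inv_eq_right_inv hmul
  refine ⟨hunit, ?_⟩
  rw [hinv, hJ, hA2, hB, Matrix.fromBlocks_multiply, ← Matrix.fromBlocks_one,
    fromBlocks_sub]
  apply fromBlocks_ext
  · -- top-left block
    rw [colVec_smul, Matrix.smul_mul, colVec_mul_rowVec]
    simp only [Matrix.sub_mul, Matrix.mul_sub, Matrix.smul_mul, Matrix.one_mul,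
      Matrix.mul_assoc, hiS, Matrix.mul_one]
    abel
  · -- top-right block
    rw [Matrix.sub_mul, mul_colVec, hiSd, Matrix.smul_mul, Matrix.mul_assoc,
      mul_colVec, hiSd, vecMulVec_mul_colVec, colVec_smul, smul_smul, hkey, one_smul]
    simp
  · -- bottom-left block
    rw [Matrix.mul_sub, hiS, Matrix.vecMul_sub, Matrix.vecMul_one,
      ← Matrix.vecMul_vecMul, rowVec_smul, Matrix.smul_mul, rowVec_mul,
      sub_smul_rowVec, smul_sub, const_mul_rowVec, neg_smul]
    abel
  · -- bottom-right block
    rw [rowVec_smul, Matrix.smul_mul, rowVec_mul_colVec]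
    have : w ᵥ* S⁻¹ ⬝ᵥ d = star c ⬝ᵥ q := by
      rw [← Matrix.dotProduct_mulVec, hiSd, hw]
    ext i j
    simp [smul_eq_mul, this, hkey, Matrix.one_apply]
    exact sub_eq_zero.mpr hkey.symm
end

section
/- Let n ≥ 1, let C ∈ ℂ^{n×n} and c, v ∈ ℂⁿ satisfy c^H C = 0 (as a row vector) and c^H v = 1. Then for every γ ∈ ℂ with γ ≠ 0, γ is an eigenvalue of C if and only if γ is an eigenvalue of C (I − v c^H); i.e., the matrices C and C (I − v c^H) have the same nonzero eigenvalues. -/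
open Matrix

/-- If `cᴴ C = 0` and `cᴴ v = 1`, then `C` and `C (I − v cᴴ)` have the
same nonzero eigenvalues. -/
theorem same_nonzero_eigenvalues (n : ℕ) (hn : 1 ≤ n)
    (C : Matrix (Fin n) (Fin n) ℂ) (c v : Fin n → ℂ)
    (hC : star c ᵥ* C = 0) (hv : star c ⬝ᵥ v = 1) :
    ∀ γ : ℂ, γ ≠ 0 →
      (γ ∈ spectrum ℂ C ↔ γ ∈ spectrum ℂ (C * (1 - vecMulVec v (star c)))) := by
  intro γ hγ
  have hBC : (1 - vecMulVec v (star c)) * C = C := by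
    have h0 : vecMulVec v (star c) * C = 0 := by
      ext i j
      simp only [mul_apply, vecMulVec_apply, Matrix.zero_apply, mul_assoc, ← Finset.mul_sum]
      have : ∑ x, star c x * C x j = (star c ᵥ* C) j := by
        simp [vecMul, dotProduct]
      rw [this, hC]
      simp
    rw [sub_mul, h0, one_mul, sub_zero]
  have key := spectrum.nonzero_mul_comm (𝕜 := ℂ) C (1 - vecMulVec v (star c))
  rw [hBC] at key
  constructor
  · intro h
    have : γ ∈ spectrum ℂ C \ {0} := ⟨h, hγ⟩
    rw [← key] at this
    exact this.1
  · intro h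
    have : γ ∈ spectrum ℂ (C * (1 - vecMulVec v (star c))) \ {0} := ⟨h, hγ⟩
    rw [key] at this
    exact this.1
end

section
/- Let n ≥ 1, let M : ℂ → ℂ^{n×n} be differentiable at λ ∈ ℂ, let σ ∈ ℂ with S := M(σ) invertible, and let v, c ∈ ℂⁿ with M(λ)v = 0 and c^H v = 1. Define the row vector w^H := c^H S⁻¹, assume w^H M'(λ) v ≠ 0, and set α := 1/(w^H M'(λ) v), q := S⁻¹ M'(λ) v, C := (I − α q c^H) S⁻¹ (S − M(λ)), and B := (I − v c^H) S⁻¹ [S − M(λ) + α · M'(λ)v · (w^H M(λ))]. Then C and B have the same nonzero eigenvalues. (Hence the convergence factors of QN2 and of residual inverse iteration, QN3, coincide.) -/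
/-!
With `P := I - v cᴴ` and `E := S⁻¹ M(λ)`, the hypotheses `M(λ) v = 0`, `cᴴ v = 1` and
`cᴴ (α q) = α wᴴ M'(λ) v = 1` give `C = (I - α q cᴴ)(I - E)`, `B = C P` and `P C = C`
(that is, `cᴴ C = 0`). Since `C P` and `P C` have the same nonzero spectrum, so do `B` and `C`.
-/

open Matrix

theorem spectrum.mem_mul_iff_of_mul_eq_self {𝕜 A : Type*} [Field 𝕜] [Ring A] [Algebra 𝕜 A]
    {a p : A} (h : p * a = a) {γ : 𝕜} (hγ : γ ≠ 0) :
    γ ∈ spectrum 𝕜 (a * p) ↔ γ ∈ spectrum 𝕜 a := by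
  have key := congrArg (γ ∈ ·) (spectrum.nonzero_mul_comm (𝕜 := 𝕜) a p)
  simpa [h, hγ] using key

namespace Matrix

variable {m R : Type*} [Fintype m] [DecidableEq m] [CommRing R]

theorem one_sub_vecMulVec_mul_one_sub_vecMulVec {u v d : m → R} (hdu : d ⬝ᵥ u = 1) :
    (1 - vecMulVec v d) * (1 - vecMulVec u d) = 1 - vecMulVec u d := by
  simp only [mul_sub, sub_mul, one_mul, mul_one, vecMulVec_mul_vecMulVec, hdu, one_smul]
  abel

theorem one_sub_vecMulVec_mul_one_sub_mul_one_sub_vecMulVec {E : Matrix m m R} {u v d : m → R}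
    (hEv : E *ᵥ v = 0) (hdv : d ⬝ᵥ v = 1) (hdu : d ⬝ᵥ u = 1) :
    (1 - vecMulVec u d) * (1 - E) * (1 - vecMulVec v d) =
      (1 - vecMulVec v d) * (1 - E + vecMulVec u (d ᵥ* E)) := by
  simp only [mul_sub, sub_mul, mul_add, one_mul, mul_one, mul_vecMulVec, vecMulVec_mul,
    vecMulVec_mulVec, op_smul_eq_smul, ← dotProduct_mulVec, hEv, hdv, hdu, one_smul,
    zero_vecMulVec, dotProduct_zero, zero_smul]
  abel

end Matrix

theorem qn2_resinv_same_convergence_factor_general (n : ℕ)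
    (M : ℂ → Matrix (Fin n) (Fin n) ℂ) (lam σ : ℂ)
    (Mp : Matrix (Fin n) (Fin n) ℂ)
    (hS : IsUnit (M σ)) (v c : Fin n → ℂ)
    (hv : M lam *ᵥ v = 0) (hc : star c ⬝ᵥ v = 1)
    (w : Fin n → ℂ) (hw : w = star c ᵥ* (M σ)⁻¹)
    (hwd : w ⬝ᵥ (Mp *ᵥ v) ≠ 0)
    (α : ℂ) (hα : α = (w ⬝ᵥ (Mp *ᵥ v))⁻¹)
    (q : Fin n → ℂ) (hq : q = (M σ)⁻¹ *ᵥ (Mp *ᵥ v))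
    (C B : Matrix (Fin n) (Fin n) ℂ)
    (hCdef : C = (1 - α • vecMulVec q (star c)) * (M σ)⁻¹ * (M σ - M lam))
    (hBdef : B = (1 - vecMulVec v (star c)) * (M σ)⁻¹ *
      (M σ - M lam + α • vecMulVec (Mp *ᵥ v) (w ᵥ* M lam))) :
    ∀ γ : ℂ, γ ≠ 0 → (γ ∈ spectrum ℂ C ↔ γ ∈ spectrum ℂ B) := by
  intro γ hγ
  set E := (M σ)⁻¹ * M lam
  have hSE : (M σ)⁻¹ * (M σ - M lam) = 1 - E := by
    rw [mul_sub, nonsing_inv_mul _ ((isUnit_iff_isUnit_det _).mp hS)]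
  have hEv : E *ᵥ v = 0 := by rw [← mulVec_mulVec, hv, mulVec_zero]
  have hcq : star c ⬝ᵥ (α • q) = 1 := by
    rw [dotProduct_smul, hq, dotProduct_mulVec, ← hw, hα, smul_eq_mul, inv_mul_cancel₀ hwd]
  have hC : C = (1 - vecMulVec (α • q) (star c)) * (1 - E) := by
    rw [hCdef, smul_vecMulVec, mul_assoc, hSE]
  have hB : B = C * (1 - vecMulVec v (star c)) := by
    have hcorr : (M σ)⁻¹ * α • vecMulVec (Mp *ᵥ v) (w ᵥ* M lam) =
        vecMulVec (α • q) (star c ᵥ* E) := by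
      rw [mul_smul_comm, mul_vecMulVec, ← smul_vecMulVec, hw, vecMul_vecMul, ← hq]
    rw [hC, one_sub_vecMulVec_mul_one_sub_mul_one_sub_vecMulVec hEv hc hcq, hBdef, mul_assoc,
      mul_add, hSE, hcorr]
  have hPC : (1 - vecMulVec v (star c)) * C = C := by
    rw [hC, ← mul_assoc, one_sub_vecMulVec_mul_one_sub_vecMulVec hcq]
  rw [hB, spectrum.mem_mul_iff_of_mul_eq_self hPC hγ]

/-- (Corollary 3.3) The (1,1)-block `C` of the QN2 iteration matrix and the
residual inverse iteration matrix `B` of Jarlebring–Michiels have the same nonzero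
eigenvalues: hence the convergence factors of QN2 and QN3 coincide. -/
theorem qn2_resinv_same_convergence_factor (n : ℕ) (hn : 1 ≤ n)
    (M : ℂ → Matrix (Fin n) (Fin n) ℂ) (lam σ : ℂ)
    (Mp : Matrix (Fin n) (Fin n) ℂ)
    (hMp : ∀ i j, HasDerivAt (fun t : ℂ => M t i j) (Mp i j) lam)
    (hS : IsUnit (M σ)) (v c : Fin n → ℂ)
    (hv : M lam *ᵥ v = 0) (hc : star c ⬝ᵥ v = 1)
    (w : Fin n → ℂ) (hw : w = star c ᵥ* (M σ)⁻¹)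
    (hwd : w ⬝ᵥ (Mp *ᵥ v) ≠ 0)
    (α : ℂ) (hα : α = (w ⬝ᵥ (Mp *ᵥ v))⁻¹)
    (q : Fin n → ℂ) (hq : q = (M σ)⁻¹ *ᵥ (Mp *ᵥ v))
    (C B : Matrix (Fin n) (Fin n) ℂ)
    (hCdef : C = (1 - α • vecMulVec q (star c)) * (M σ)⁻¹ * (M σ - M lam))
    (hBdef : B = (1 - vecMulVec v (star c)) * (M σ)⁻¹ *
      (M σ - M lam + α • vecMulVec (Mp *ᵥ v) (w ᵥ* M lam))) :
    ∀ γ : ℂ, γ ≠ 0 → (γ ∈ spectrum ℂ C ↔ γ ∈ spectrum ℂ B) :=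
  qn2_resinv_same_convergence_factor_general n M lam σ Mp hS v c hv hc w hw hwd α hα q hq C B hCdef
    hBdef
end

section
/- Let n ≥ 1 and k ≥ 1. Let M : ℂ → ℂ^{n×n} be differentiable at points λ₁, …, λ_k ∈ ℂ, let v₁, …, v_k, u₁, …, u_k, c ∈ ℂⁿ with c^H v_i = 1 and d_i := u_i^H M'(λ_i) v_i ≠ 0 for all i. Let σ ∈ ℂ with σ ≠ λ_i for all i, suppose M(σ) is invertible, and suppose there is R ∈ ℂ^{n×n} such that M(σ)⁻¹ = ∑_{i=1}^k (σ − λ_i)⁻¹ (v_i u_i^H)/d_i + R. Define w^H := c^H M(σ)⁻¹, assume w^H M'(λ₁) v₁ ≠ 0, set N := M(σ) − M(λ₁) + (w^H M'(λ₁) v₁)⁻¹ · M'(λ₁)v₁ · (w^H M(λ₁)), B := (I − v₁ c^H) M(σ)⁻¹ N, and κ_i := ‖u_i‖ ‖v_i‖ / |d_i|. Then the spectral radius of B satisfies ρ(B) ≤ ‖I − v₁ c^H‖ · ‖N‖ · ( ∑_{i=2}^k κ_i / |σ − λ_i| + ‖R‖ ). -/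
open Matrix
open scoped Matrix.Norms.L2Operator

/-- The Euclidean norm of a complex vector. -/
noncomputable def euclNorm {n : ℕ} (x : Fin n → ℂ) : ℝ :=
  ‖(EuclideanSpace.equiv (Fin n) ℂ).symm x‖

lemma norm_vecMulVec_le {n : ℕ} (a b : Fin n → ℂ) :
    ‖vecMulVec a (star b)‖ ≤ euclNorm a * euclNorm b := by
  rw [Matrix.l2_opNorm_def]
  apply ContinuousLinearMap.opNorm_le_bound _
    (mul_nonneg (norm_nonneg _) (norm_nonneg _))
  intro x
  have hmv : (vecMulVec a (star b)) *ᵥ (WithLp.equiv 2 (Fin n → ℂ) x)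
      = (star b ⬝ᵥ (WithLp.equiv 2 (Fin n → ℂ)) x) • a := by
    ext i
    simp only [mulVec, dotProduct, vecMulVec_apply, Pi.smul_apply, smul_eq_mul,
      Finset.sum_mul, Finset.mul_sum]
    exact Finset.sum_congr rfl fun j _ => by ring
  have happ : (Matrix.toEuclideanLin.trans LinearMap.toContinuousLinearMap
        (vecMulVec a (star b))) x
      = (star b ⬝ᵥ (WithLp.equiv 2 (Fin n → ℂ)) x) •
        ((EuclideanSpace.equiv (Fin n) ℂ).symm a) := by
    simp only [LinearEquiv.trans_apply, LinearMap.coe_toContinuousLinearMap',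
      Matrix.toEuclideanLin_apply, hmv]
    exact congrArg (WithLp.toLp 2) hmv
  rw [happ, norm_smul]
  have hinner : star b ⬝ᵥ (WithLp.equiv 2 (Fin n → ℂ)) x
      = inner ℂ ((EuclideanSpace.equiv (Fin n) ℂ).symm b) x := by
    rw [EuclideanSpace.inner_eq_star_dotProduct]
    exact dotProduct_comm _ _
  rw [hinner]
  show _ ≤ _
  calc ‖(inner ℂ ((EuclideanSpace.equiv (Fin n) ℂ).symm b) x : ℂ)‖ *
        ‖(EuclideanSpace.equiv (Fin n) ℂ).symm a‖
      ≤ (‖(EuclideanSpace.equiv (Fin n) ℂ).symm b‖ * ‖x‖) *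
        ‖(EuclideanSpace.equiv (Fin n) ℂ).symm a‖ :=
        mul_le_mul_of_nonneg_right (norm_inner_le_norm _ _) (norm_nonneg _)
    _ = ‖(EuclideanSpace.equiv (Fin n) ℂ).symm a‖ *
        ‖(EuclideanSpace.equiv (Fin n) ℂ).symm b‖ * ‖x‖ := by ring

/-- (Corollary 4.1, eigenvalue clustering bound) Under a Keldysh-type
decomposition `M(σ)⁻¹ = ∑ i (σ − λᵢ)⁻¹ (vᵢ uᵢᴴ)/dᵢ + R`, the spectral radius of the
QN2/residual inverse iteration matrix `B = (I − v₁cᴴ) M(σ)⁻¹ N` satisfies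
`ρ(B) ≤ ‖I − v₁cᴴ‖ ‖N‖ (∑_{i≠1} κᵢ/|σ − λᵢ| + ‖R‖)`. -/
theorem eigenvalue_clustering_bound (n k : ℕ) (hn : 1 ≤ n) (hk : 0 < k)
    (M : ℂ → Matrix (Fin n) (Fin n) ℂ)
    (lam : Fin k → ℂ) (Mp : Fin k → Matrix (Fin n) (Fin n) ℂ)
    (hMp : ∀ i, ∀ a b, HasDerivAt (fun t : ℂ => M t a b) (Mp i a b) (lam i))
    (v u : Fin k → Fin n → ℂ) (c : Fin n → ℂ)
    (hcv : ∀ i, star c ⬝ᵥ v i = 1)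
    (d : Fin k → ℂ) (hd : ∀ i, d i = star (u i) ⬝ᵥ (Mp i *ᵥ v i))
    (hd0 : ∀ i, d i ≠ 0)
    (σ : ℂ) (hσ : ∀ i, σ ≠ lam i) (hS : IsUnit (M σ))
    (R : Matrix (Fin n) (Fin n) ℂ)
    (hKeldysh : (M σ)⁻¹ =
      ∑ i, ((σ - lam i)⁻¹ * (d i)⁻¹) • vecMulVec (v i) (star (u i)) + R)
    (w : Fin n → ℂ) (hw : w = star c ᵥ* (M σ)⁻¹)
    (i1 : Fin k) (hi1 : i1 = ⟨0, hk⟩)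
    (hw1 : w ⬝ᵥ (Mp i1 *ᵥ v i1) ≠ 0)
    (N B : Matrix (Fin n) (Fin n) ℂ)
    (hN : N = M σ - M (lam i1) +
      (w ⬝ᵥ (Mp i1 *ᵥ v i1))⁻¹ • vecMulVec (Mp i1 *ᵥ v i1) (w ᵥ* M (lam i1)))
    (hB : B = (1 - vecMulVec (v i1) (star c)) * (M σ)⁻¹ * N)
    (κ : Fin k → ℝ) (hκ : ∀ i, κ i = euclNorm (u i) * euclNorm (v i) / ‖d i‖) :
    spectralRadius ℂ B ≤ ENNReal.ofReal
      (‖1 - vecMulVec (v i1) (star c)‖ * ‖N‖ *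
        ((∑ i ∈ Finset.univ.filter (fun i => i ≠ i1), κ i / ‖σ - lam i‖) + ‖R‖)) := by
  classical
  set P : Matrix (Fin n) (Fin n) ℂ := 1 - vecMulVec (v i1) (star c) with hP
  set V : Fin k → Matrix (Fin n) (Fin n) ℂ := fun i => vecMulVec (v i) (star (u i)) with hV
  set coef : Fin k → ℂ := fun i => (σ - lam i)⁻¹ * (d i)⁻¹ with hcoef
  set S : Matrix (Fin n) (Fin n) ℂ :=
    (∑ i ∈ Finset.univ.filter (fun i => i ≠ i1), coef i • V i) + R with hSdef
  -- P kills the first rank-one term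
  have hPV : P * V i1 = 0 := by
    have hmulVV : vecMulVec (v i1) (star c) * V i1 = V i1 := by
      ext i j
      simp only [hV, Matrix.mul_apply, vecMulVec_apply]
      calc ∑ x, v i1 i * star c x * (v i1 x * star (u i1) j)
          = (v i1 i * star (u i1) j) * (star c ⬝ᵥ v i1) := by
            rw [dotProduct, Finset.mul_sum]
            exact Finset.sum_congr rfl fun x _ => by ring
        _ = v i1 i * star (u i1) j := by rw [hcv i1, mul_one]
    rw [hP, sub_mul, one_mul, hmulVV, sub_self]
  have hsum : (M σ)⁻¹ = coef i1 • V i1 + S := by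
    rw [hKeldysh, hSdef, ← Finset.add_sum_erase Finset.univ _ (Finset.mem_univ i1),
      Finset.filter_ne', add_assoc]
  have hPM : P * (M σ)⁻¹ = P * S := by
    rw [hsum, mul_add, mul_smul_comm, hPV, smul_zero, zero_add]
  have hnormS : ‖S‖ ≤
      (∑ i ∈ Finset.univ.filter (fun i => i ≠ i1), κ i / ‖σ - lam i‖) + ‖R‖ := by
    refine le_trans (norm_add_le _ _) (add_le_add ?_ le_rfl)
    refine le_trans (norm_sum_le _ _) (Finset.sum_le_sum fun i _ => ?_)
    rw [norm_smul, hκ i]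
    have h1 : ‖V i‖ ≤ euclNorm (v i) * euclNorm (u i) := norm_vecMulVec_le _ _
    have h2 : ‖coef i‖ = (‖σ - lam i‖)⁻¹ * (‖d i‖)⁻¹ := by
      simp [hcoef, norm_mul, norm_inv]
    calc ‖coef i‖ * ‖V i‖
        ≤ ‖coef i‖ * (euclNorm (v i) * euclNorm (u i)) :=
          mul_le_mul_of_nonneg_left h1 (norm_nonneg _)
      _ = euclNorm (u i) * euclNorm (v i) / ‖d i‖ / ‖σ - lam i‖ := by
          rw [h2, div_div, div_eq_mul_inv, mul_inv]
          ring
  have hnormB : ‖B‖ ≤ ‖P‖ * ‖N‖ *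
      ((∑ i ∈ Finset.univ.filter (fun i => i ≠ i1), κ i / ‖σ - lam i‖) + ‖R‖) := by
    have hBPS : B = (P * S) * N := by rw [hB, hPM]
    calc ‖B‖ = ‖(P * S) * N‖ := by rw [hBPS]
      _ ≤ ‖P * S‖ * ‖N‖ := Matrix.l2_opNorm_mul _ _
      _ ≤ (‖P‖ * ‖S‖) * ‖N‖ :=
          mul_le_mul_of_nonneg_right (Matrix.l2_opNorm_mul _ _) (norm_nonneg _)
      _ = (‖P‖ * ‖N‖) * ‖S‖ := by ring
      _ ≤ _ := mul_le_mul_of_nonneg_left hnormS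
          (mul_nonneg (norm_nonneg _) (norm_nonneg _))
  haveI : Nonempty (Fin n) := ⟨⟨0, hn⟩⟩
  haveI : Nontrivial (EuclideanSpace ℂ (Fin n)) := inferInstance
  haveI : NormOneClass (Matrix (Fin n) (Fin n) ℂ) := by
    constructor
    rw [Matrix.cstar_norm_def, _root_.map_one]
    exact ContinuousLinearMap.norm_id
  calc spectralRadius ℂ B ≤ (‖B‖₊ : ENNReal) := spectrum.spectralRadius_le_nnnorm (𝕜 := ℂ) B
    _ = ENNReal.ofReal ‖B‖ := (ofReal_norm B).symm
    _ ≤ _ := ENNReal.ofReal_le_ofReal hnormB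
end

section
/- Let n ≥ 1, let M : ℂ → ℂ^{n×n} be differentiable at λ₁ ∈ ℂ, let v₁, u₁, c ∈ ℂⁿ with c^H v₁ = 1, u₁^H M(λ₁) = 0 (u₁ is a left eigenvector), and u₁^H M'(λ₁) v₁ ≠ 0, and set K := (v₁ u₁^H)/(u₁^H M'(λ₁) v₁). Suppose there are ε > 0 and a function R₁ : ℂ → ℂ^{n×n} continuous at λ₁ such that for all σ with 0 < |σ − λ₁| < ε the matrix M(σ) is invertible and M(σ)⁻¹ = (σ − λ₁)⁻¹ K + R₁(σ). With w_σ^H := c^H M(σ)⁻¹, the limit as σ → λ₁ (σ ≠ λ₁) of (σ − λ₁)⁻¹ (w_σ^H M'(λ₁) v₁)⁻¹ · M'(λ₁)v₁ · (w_σ^H M(λ₁)) exists and equals M'(λ₁) v₁ · (c^H R₁(λ₁) M(λ₁)). -/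
open Matrix Filter Topology

/-!
Insert Keldysh's decomposition into `w_σᴴ = cᴴ M(σ)⁻¹`. Since `cᴴ v₁ = 1`, the pole part of `w_σᴴ`
is a multiple of `u₁ᴴ`: it is annihilated by `M(λ₁)`, and in `w_σᴴ M'(λ₁) v₁` it contributes
exactly `(σ - λ₁)⁻¹`, which cancels the prefactor. What remains,
`(1 + (σ - λ₁) cᴴ R₁(σ) M'(λ₁) v₁)⁻¹ M'(λ₁) v₁ (cᴴ R₁(σ) M(λ₁))`, is continuous at `λ₁`.
-/

section SimplePole

variable {ι 𝕜 : Type*} [Fintype ι]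

theorem inv_smul_vecMulVec_of_simple_pole [Field 𝕜] {a u r w : ι → 𝕜} {A : Matrix ι ι 𝕜} {s : 𝕜}
    (hs : s ≠ 0) (hu : u ᵥ* A = 0) (hd : u ⬝ᵥ a ≠ 0)
    (hw : w = (s⁻¹ * (u ⬝ᵥ a)⁻¹) • u + r) :
    s⁻¹ • ((w ⬝ᵥ a)⁻¹ • vecMulVec a (w ᵥ* A)) =
      (1 + s * (r ⬝ᵥ a))⁻¹ • vecMulVec a (r ᵥ* A) := by
  have hwa : w ⬝ᵥ a = s⁻¹ + r ⬝ᵥ a := by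
    rw [hw, add_dotProduct, smul_dotProduct, smul_eq_mul, mul_assoc, inv_mul_cancel₀ hd, mul_one]
  have hwA : w ᵥ* A = r ᵥ* A := by
    rw [hw, add_vecMul, smul_vecMul, hu, smul_zero, zero_add]
  rw [hwa, hwA, smul_smul, ← mul_inv, mul_add, mul_inv_cancel₀ hs]

theorem tendsto_inv_one_add_mul_smul_vecMulVec [NormedField 𝕜] {r : 𝕜 → ι → 𝕜} {x : 𝕜}
    (hr : ContinuousAt r x) (a : ι → 𝕜) (A : Matrix ι ι 𝕜) :
    Tendsto (fun σ => (1 + (σ - x) * (r σ ⬝ᵥ a))⁻¹ • vecMulVec a (r σ ᵥ* A)) (𝓝 x)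
      (𝓝 (vecMulVec a (r x ᵥ* A))) := by
  have h : ContinuousAt (fun σ => (1 + (σ - x) * (r σ ⬝ᵥ a))⁻¹ • vecMulVec a (r σ ᵥ* A)) x := by
    fun_prop (disch := simp)
  simpa using h.tendsto

end SimplePole

theorem keldysh_limit_general (n : ℕ)
    (M : ℂ → Matrix (Fin n) (Fin n) ℂ) (lam1 : ℂ)
    (Mp : Matrix (Fin n) (Fin n) ℂ)
    (v1 u1 c : Fin n → ℂ)
    (hc : star c ⬝ᵥ v1 = 1)
    (hleft : star u1 ᵥ* M lam1 = 0)
    (hd : star u1 ⬝ᵥ (Mp *ᵥ v1) ≠ 0)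
    (K : Matrix (Fin n) (Fin n) ℂ)
    (hK : K = (star u1 ⬝ᵥ (Mp *ᵥ v1))⁻¹ • vecMulVec v1 (star u1))
    (ε : ℝ) (hε : 0 < ε)
    (R1 : ℂ → Matrix (Fin n) (Fin n) ℂ)
    (hR1 : ContinuousAt R1 lam1)
    (hKeldysh : ∀ σ : ℂ, σ ≠ lam1 → ‖σ - lam1‖ < ε →
      IsUnit (M σ) ∧ (M σ)⁻¹ = (σ - lam1)⁻¹ • K + R1 σ) :
    Tendsto
      (fun σ : ℂ => (σ - lam1)⁻¹ •
        (((star c ᵥ* (M σ)⁻¹) ⬝ᵥ (Mp *ᵥ v1))⁻¹ •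
          vecMulVec (Mp *ᵥ v1) ((star c ᵥ* (M σ)⁻¹) ᵥ* M lam1)))
      (nhdsWithin lam1 {lam1}ᶜ)
      (nhds (vecMulVec (Mp *ᵥ v1) (star c ᵥ* (R1 lam1 * M lam1)))) := by
  have hr : ContinuousAt (fun σ => star c ᵥ* R1 σ) lam1 := by fun_prop
  rw [← vecMul_vecMul]
  refine ((tendsto_inv_one_add_mul_smul_vecMulVec hr _ _).mono_left nhdsWithin_le_nhds).congr' ?_
  filter_upwards [nhdsWithin_le_nhds (eventually_norm_sub_lt lam1 hε), self_mem_nhdsWithin]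
    with σ hσε hσ
  refine (inv_smul_vecMulVec_of_simple_pole (sub_ne_zero.2 hσ) hleft hd ?_).symm
  rw [(hKeldysh σ hσ hσε).2, hK, vecMul_add, vecMul_smul, vecMul_smul, vecMul_vecMulVec, hc,
    one_smul, smul_smul]

/-- (key limit in eq. (4.2)) Under the Keldysh decomposition
`M(σ)⁻¹ = (σ − λ₁)⁻¹ K + R₁(σ)` near a simple eigentriplet `(λ₁, v₁, u₁)`, with
`w_σᴴ = cᴴ M(σ)⁻¹`, the limit as `σ → λ₁`, `σ ≠ λ₁`, of
`(σ − λ₁)⁻¹ (w_σᴴ M'(λ₁) v₁)⁻¹ M'(λ₁)v₁ (w_σᴴ M(λ₁))`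
exists and equals `M'(λ₁)v₁ · (cᴴ R₁(λ₁) M(λ₁))`. -/
theorem keldysh_limit (n : ℕ) (hn : 1 ≤ n)
    (M : ℂ → Matrix (Fin n) (Fin n) ℂ) (lam1 : ℂ)
    (Mp : Matrix (Fin n) (Fin n) ℂ)
    (hMp : ∀ a b, HasDerivAt (fun t : ℂ => M t a b) (Mp a b) lam1)
    (v1 u1 c : Fin n → ℂ)
    (hc : star c ⬝ᵥ v1 = 1)
    (hleft : star u1 ᵥ* M lam1 = 0)
    (hd : star u1 ⬝ᵥ (Mp *ᵥ v1) ≠ 0)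
    (K : Matrix (Fin n) (Fin n) ℂ)
    (hK : K = (star u1 ⬝ᵥ (Mp *ᵥ v1))⁻¹ • vecMulVec v1 (star u1))
    (ε : ℝ) (hε : 0 < ε)
    (R1 : ℂ → Matrix (Fin n) (Fin n) ℂ)
    (hR1 : ContinuousAt R1 lam1)
    (hKeldysh : ∀ σ : ℂ, σ ≠ lam1 → ‖σ - lam1‖ < ε →
      IsUnit (M σ) ∧ (M σ)⁻¹ = (σ - lam1)⁻¹ • K + R1 σ) :
    Tendsto
      (fun σ : ℂ => (σ - lam1)⁻¹ •
        (((star c ᵥ* (M σ)⁻¹) ⬝ᵥ (Mp *ᵥ v1))⁻¹ •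
          vecMulVec (Mp *ᵥ v1) ((star c ᵥ* (M σ)⁻¹) ᵥ* M lam1)))
      (nhdsWithin lam1 {lam1}ᶜ)
      (nhds (vecMulVec (Mp *ᵥ v1) (star c ᵥ* (R1 lam1 * M lam1)))) :=
  keldysh_limit_general n M lam1 Mp v1 u1 c hc hleft hd K hK ε hε R1 hR1 hKeldysh
end
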